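/- arXiv:math/0501243 — 3 statements merged into one kernel-verified Lean document; each statement's English description precedes it below -/
import Mathlib

section
/- Let E be a field and L a finite extension of E which is the compositum of intermediate extensions L₁ and L₂ of relatively prime degrees over E. Then N(L₁/E) = E* ∩ N(L/L₂), i.e., an element of E* is a norm from L₁ to E if and only if it is a norm from L to L₂. -/
/-!
Coprime degrees make `L₁` and `L₂` linearly disjoint, so a basis of `L₁/E` is a basis of `L/L₂`
and `N(L/L₂)` restricts to `N(L₁/E)` on `L₁`; this gives `N(L₁/E) ⊆ N(L/L₂)`. Conversely, if
`x ∈ E*` is a norm from `L` to `L₂`, transitivity of norms makes `x ^ [L₂:E]` a norm from `L`,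
hence from `L₁`, to `E`, while `x ^ [L₁:E] = N(L₁/E)(x)`; the degrees being coprime, `x` itself
lies in `N(L₁/E)`.
-/

/-- The norm group `N(L/E)`: the image of the norm map `L* → E*`, as a subgroup of `Eˣ`. -/
noncomputable def normGroup (E L : Type*) [Field E] [Field L] [Algebra E L] : Subgroup Eˣ :=
  (Units.map (Algebra.norm E : L →* E)).range

open Module

lemma Subgroup.mem_of_pow_mem_of_coprime {G : Type*} [CommGroup G] (H : Subgroup G) {x : G}
    {m n : ℕ} (hmn : m.Coprime n) (hm : x ^ m ∈ H) (hn : x ^ n ∈ H) : x ∈ H := by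
  rw [← QuotientGroup.eq_one_iff] at hm hn ⊢
  exact (pow_eq_one_iff_of_coprime hmn).1 ⟨hm, hn⟩

section NormGroup

variable {E K L : Type*} [Field E] [Field K] [Field L] [Algebra E K] [Algebra K L] [Algebra E L]
  [IsScalarTower E K L]

lemma pow_finrank_mem_normGroup (x : Eˣ) : x ^ finrank E K ∈ normGroup E K :=
  ⟨Units.map (algebraMap E K).toMonoidHom x, Units.ext (Algebra.norm_algebraMap (x : E))⟩

lemma normGroup_le_of_isScalarTower : normGroup E L ≤ normGroup E K := by
  rintro _ ⟨w, rfl⟩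
  exact ⟨Units.map (Algebra.norm K : L →* K) w, Units.ext Algebra.norm_norm⟩

lemma pow_finrank_mem_normGroup_of_units_map_mem {x : Eˣ}
    (hx : Units.map (algebraMap E K).toMonoidHom x ∈ normGroup K L) :
    x ^ finrank E K ∈ normGroup E L := by
  obtain ⟨w, hw⟩ := hx
  refine ⟨w, Units.ext ?_⟩
  calc Algebra.norm E (w : L) = Algebra.norm E (Algebra.norm K (w : L)) := Algebra.norm_norm.symm
    _ = Algebra.norm E (algebraMap E K x) := congrArg (fun u : Kˣ ↦ Algebra.norm E (u : K)) hw
    _ = ↑(x ^ finrank E K) := Algebra.norm_algebraMap _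

end NormGroup

theorem stmt_3 {E L : Type*} [Field E] [Field L] [Algebra E L] [FiniteDimensional E L]
    (L₁ L₂ : IntermediateField E L) (hcomp : L₁ ⊔ L₂ = ⊤)
    (hcop : Nat.Coprime (Module.finrank E L₁) (Module.finrank E L₂)) :
    ∀ x : Eˣ, x ∈ normGroup E L₁ ↔
      Units.map (algebraMap E L₂).toMonoidHom x ∈ normGroup L₂ L := by
  intro x
  have hdisj : L₂.LinearDisjoint L₁ := .of_finrank_coprime hcop.symm
  constructor
  · rintro ⟨y, rfl⟩
    exact ⟨Units.map (algebraMap L₁ L).toMonoidHom y,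
      Units.ext (hdisj.norm_algebraMap (by rwa [sup_comm]) y)⟩
  · intro hx
    have h₁ : x ^ finrank E L₁ ∈ normGroup E L₁ := pow_finrank_mem_normGroup x
    have h₂ : x ^ finrank E L₂ ∈ normGroup E L₁ :=
      normGroup_le_of_isScalarTower (pow_finrank_mem_normGroup_of_units_map_mem hx)
    exact Subgroup.mem_of_pow_mem_of_coprime _ hcop h₁ h₂
end

section
/- Let P be a finite nonabelian p-group all of whose proper subgroups are abelian. Then a subgroup H of P is normal in P if and only if [P,P] ⊆ H or H ⊆ Φ(P). -/
/-!
A normal subgroup `H` not contained in `Φ(P)` misses some maximal subgroup `M`, so `P = M H` and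
`P / H` is a quotient of the abelian group `M`; hence `[P, P] ≤ H`. Conversely, if `a` and `b` do
not commute, their centralizers are proper, hence abelian, hence maximal; so every `z ∈ Φ(P)`
commutes with `a` and `b`, and the centralizer of `z`, containing both, cannot be proper. Thus
`Φ(P) ≤ Z(P)`, so subgroups of `Φ(P)` are normal, as are subgroups containing `[P, P]`.
-/

open Subgroup

section

variable {G : Type*} [Group G]

lemma le_frattini_iff {H : Subgroup G} :
    H ≤ frattini G ↔ ∀ M : Subgroup G, IsCoatom M → H ≤ M := by
  simp only [frattini, Order.radical, le_iInf₂_iff, Set.mem_ofPred_eq]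

lemma Subgroup.normal_of_le_center {H : Subgroup G} (h : H ≤ center G) : H.Normal :=
  ⟨fun n hn g => by rwa [mem_center_iff.mp (h hn) g, mul_inv_cancel_right]⟩

variable (G) in
def ProperSubgroupsCommute : Prop :=
  ∀ K : Subgroup G, K ≠ ⊤ → ∀ a b : K, a * b = b * a

section ProperSubgroupsCommute

variable (hprop : ProperSubgroupsCommute G)
include hprop

lemma mul_comm_of_mem_of_ne_top {K : Subgroup G} (hK : K ≠ ⊤) {a b : G} (ha : a ∈ K)
    (hb : b ∈ K) : a * b = b * a :=
  congrArg Subtype.val (hprop K hK ⟨a, ha⟩ ⟨b, hb⟩)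

lemma isCoatom_centralizer_singleton {a : G} (ha : centralizer {a} ≠ ⊤) :
    IsCoatom (centralizer {a}) := by
  refine isCoatom_iff_ge_of_le.mpr ⟨ha, fun K hK hle g hg => ?_⟩
  have haK : a ∈ K := hle (mem_centralizer_singleton_iff.mpr rfl)
  exact mem_centralizer_singleton_iff.mpr (mul_comm_of_mem_of_ne_top hprop hK hg haK)

lemma frattini_le_center (hna : ¬ ∀ a b : G, a * b = b * a) : frattini G ≤ center G := by
  obtain ⟨a, b, hab⟩ : ∃ a b : G, a * b ≠ b * a := by simpa using hna
  have hCa : centralizer {a} ≠ ⊤ := fun h =>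
    hab (mem_centralizer_singleton_iff.mp (h ▸ mem_top b)).symm
  have hCb : centralizer {b} ≠ ⊤ := fun h =>
    hab (mem_centralizer_singleton_iff.mp (h ▸ mem_top a))
  intro z hz
  have hza : z ∈ centralizer {a} :=
    frattini_le_coatom (isCoatom_centralizer_singleton hprop hCa) hz
  have hzb : z ∈ centralizer {b} :=
    frattini_le_coatom (isCoatom_centralizer_singleton hprop hCb) hz
  refine mem_center_iff.mpr fun g => mem_centralizer_singleton_iff.mp ?_
  by_contra hg
  have hCz : centralizer {z} ≠ ⊤ := fun h => hg (h ▸ mem_top g)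
  exact hab (mul_comm_of_mem_of_ne_top hprop hCz
    (mem_centralizer_singleton_iff.mpr (mem_centralizer_singleton_iff.mp hza).symm)
    (mem_centralizer_singleton_iff.mpr (mem_centralizer_singleton_iff.mp hzb).symm))

lemma commutator_le_of_not_le_frattini {H : Subgroup G} [H.Normal] (hH : ¬ H ≤ frattini G) :
    commutator G ≤ H := by
  obtain ⟨M, hM, hHM⟩ : ∃ M : Subgroup G, IsCoatom M ∧ ¬ H ≤ M := by
    simpa [le_frattini_iff] using hH
  have hsup : H ⊔ M = ⊤ := sup_comm M H ▸ codisjoint_iff.mp (hM.not_le_iff_codisjoint.mp hHM)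
  have hMcomm : IsMulCommutative M := ⟨⟨hprop M hM.ne_top⟩⟩
  exact Normal.commutator_le_of_self_sup_commutative_eq_top hsup hMcomm

end ProperSubgroupsCommute

end

theorem stmt_7_general {P : Type*} [Group P]
    (hna : ¬ ∀ a b : P, a * b = b * a)
    (hprop : ∀ H : Subgroup P, H ≠ ⊤ → ∀ a b : H, a * b = b * a)
    (H : Subgroup P) :
    H.Normal ↔ commutator P ≤ H ∨ H ≤ frattini P := by
  refine ⟨fun _ => or_iff_not_imp_right.mpr (commutator_le_of_not_le_frattini hprop), ?_⟩
  rintro (h | h)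
  · exact .of_commutator_le _ h
  · exact normal_of_le_center (h.trans (frattini_le_center hprop hna))

theorem stmt_7 {P : Type*} [Group P] [Finite P] (p : ℕ) (hp : p.Prime)
    (hpgrp : IsPGroup p P)
    (hna : ¬ ∀ a b : P, a * b = b * a)
    (hprop : ∀ H : Subgroup P, H ≠ ⊤ → ∀ a b : H, a * b = b * a)
    (H : Subgroup P) :
    H.Normal ↔ commutator P ≤ H ∨ H ≤ frattini P :=
  stmt_7_general hna hprop H
end

section
/- Let P be a finite nonabelian p-group all of whose proper subgroups are abelian, and H₀ a normal subgroup of P. Then the quotient P/H₀ is cyclic if and only if H₀ is not contained in the Frattini subgroup Φ(P). -/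
/-!
Any two non-commuting elements `a, b` of `P` generate a subgroup that is not abelian, hence all
of `P`. Every maximal subgroup of a finite `p`-group is normal of index `p`, so `P ⧸ Φ(P)` is
abelian of exponent `p`; being generated by the images of `a` and `b`, it has order at most `p²`.
Since `Φ(P)` consists of non-generators, `P ⧸ H₀` is cyclic iff `P ⧸ (H₀ ⊔ Φ(P))` is. If
`H₀ ≤ Φ(P)` this would make `P` itself cyclic, which it is not; otherwise `H₀ ⊔ Φ(P)` strictly
contains `Φ(P)`, so its index is a power of `p` below `p²`, and the quotient is cyclic.
-/
open Subgroup
open scoped commutatorElement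

section Generation

variable {G : Type*} [Group G]

theorem isCyclic_quotient_iff_exists_closure_singleton_sup_eq_top {N : Subgroup G} [N.Normal] :
    IsCyclic (G ⧸ N) ↔ ∃ c : G, closure {c} ⊔ N = ⊤ := by
  have hmk : ∀ c : G, zpowers (c : G ⧸ N) = ⊤ ↔ closure {c} ⊔ N = ⊤ := fun c => by
    rw [← (comap_injective (QuotientGroup.mk'_surjective N)).eq_iff, comap_top,
      ← QuotientGroup.mk'_apply, ← MonoidHom.map_zpowers, comap_map_eq, QuotientGroup.ker_mk',
      zpowers_eq_closure]
  rw [isCyclic_iff_exists_zpowers_eq_top, QuotientGroup.mk_surjective.exists]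
  exact exists_congr hmk

theorem isCyclic_of_isCyclic_quotient_of_le_frattini [IsCoatomic (Subgroup G)] {N : Subgroup G}
    [N.Normal] (hN : N ≤ frattini G) (h : IsCyclic (G ⧸ N)) : IsCyclic G := by
  obtain ⟨c, hc⟩ := isCyclic_quotient_iff_exists_closure_singleton_sup_eq_top.1 h
  refine isCyclic_iff_exists_zpowers_eq_top.2 ⟨c, ?_⟩
  rw [zpowers_eq_closure]
  exact frattini_nongenerating (top_unique (hc.symm.le.trans (sup_le_sup_left hN _)))

theorem isCyclic_quotient_of_isCyclic_quotient_sup_frattini [IsCoatomic (Subgroup G)]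
    {N : Subgroup G} [N.Normal] (h : IsCyclic (G ⧸ (N ⊔ frattini G))) : IsCyclic (G ⧸ N) := by
  obtain ⟨c, hc⟩ := isCyclic_quotient_iff_exists_closure_singleton_sup_eq_top.1 h
  exact isCyclic_quotient_iff_exists_closure_singleton_sup_eq_top.2
    ⟨c, frattini_nongenerating (by rwa [sup_assoc])⟩

theorem card_closure_pair_le_of_commute [Finite G] {x y : G} (h : Commute x y) :
    Nat.card (closure {x, y}) ≤ orderOf x * orderOf y := by
  let f := (zpowers x).subtype.noncommCoprod (zpowers y).subtype
    fun ⟨_, m, hm⟩ ⟨_, n, hn⟩ => hm ▸ hn ▸ h.zpow_zpow m n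
  have hf : closure {x, y} = f.range := by
    rw [MonoidHom.noncommCoprod_range, range_subtype, range_subtype, zpowers_eq_closure,
      zpowers_eq_closure, ← Subgroup.closure_union, Set.singleton_union]
  rw [hf, ← Nat.card_zpowers, ← Nat.card_zpowers, ← Nat.card_prod]
  exact Nat.card_le_card_of_surjective _ f.rangeRestrict_surjective

theorem mem_frattini_iff {x : G} : x ∈ frattini G ↔ ∀ M : Subgroup G, IsCoatom M → x ∈ M := by
  simp only [frattini, Order.radical, mem_iInf, Set.mem_ofPred_eq]

end Generation

namespace IsPGroup

variable {p : ℕ} [Fact p.Prime] {G : Type*} [Group G] [Finite G]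

theorem index_eq_of_isCoatom (hG : IsPGroup p G) {M : Subgroup G} (hM : IsCoatom M) :
    M.index = p := by
  obtain ⟨n, hn⟩ := (hG.to_subgroup M).exists_card_eq
  obtain ⟨k, hk⟩ := hG.index M
  have hk0 : k ≠ 0 := by
    rintro rfl
    exact hM.1 (index_eq_one.1 (by simpa using hk))
  have hcard : Nat.card G = p ^ n * p ^ k := by rw [← M.card_mul_index, hn, hk]
  -- `M` lies in a subgroup of order `p * |M|`, which can only be `⊤`.
  obtain ⟨K, hK, hMK⟩ := Sylow.exists_subgroup_card_pow_succ
    (by rw [hcard, pow_succ]; exact mul_dvd_mul_left _ (dvd_pow_self p hk0)) hn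
  have hKM : M ≠ K := by
    rintro rfl
    exact (Nat.pow_right_injective (Fact.out : p.Prime).two_le).ne n.succ_ne_self (hK ▸ hn)
  rw [hM.2 K (hMK.lt_of_ne hKM), card_top, hcard, pow_succ] at hK
  rw [hk, Nat.eq_of_mul_eq_mul_left (pow_pos (Fact.out : p.Prime).pos n) hK]

theorem normal_of_isCoatom (hG : IsPGroup p G) {M : Subgroup G} (hM : IsCoatom M) : M.Normal :=
  have := hG.isNilpotent
  NormalizerCondition.normal_of_coatom M Group.normalizerCondition_of_isNilpotent hM

theorem commutatorElement_mem_frattini (hG : IsPGroup p G) (g h : G) : ⁅g, h⁆ ∈ frattini G := by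
  refine mem_frattini_iff.2 fun M hM => ?_
  have := hG.normal_of_isCoatom hM
  have : IsCyclic (G ⧸ M) := isCyclic_of_prime_card (hG.index_eq_of_isCoatom hM)
  rw [← QuotientGroup.eq_one_iff, ← QuotientGroup.mk'_apply, map_commutatorElement,
    commutatorElement_eq_one_iff_commute]
  exact IsCyclic.commGroup.mul_comm _ _

theorem pow_mem_frattini (hG : IsPGroup p G) (g : G) : g ^ p ∈ frattini G := by
  refine mem_frattini_iff.2 fun M hM => ?_
  have := hG.normal_of_isCoatom hM
  rw [← QuotientGroup.eq_one_iff, QuotientGroup.mk_pow, ← M.index_eq_card.trans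
    (hG.index_eq_of_isCoatom hM)]
  exact pow_card_eq_one'

theorem index_frattini_le_of_closure_pair_eq_top (hG : IsPGroup p G) {a b : G}
    (hab : closure {a, b} = ⊤) : (frattini G).index ≤ p ^ 2 := by
  have hgen : closure {(a : G ⧸ frattini G), (b : G ⧸ frattini G)} = ⊤ := by
    rw [← Set.image_pair, ← QuotientGroup.coe_mk', ← MonoidHom.map_closure, hab,
      map_top_of_surjective _ (QuotientGroup.mk'_surjective _)]
  have hord (g : G) : orderOf (g : G ⧸ frattini G) ≤ p :=
    orderOf_le_of_pow_eq_one (Fact.out : p.Prime).pos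
      (by rw [← QuotientGroup.mk_pow, QuotientGroup.eq_one_iff]; exact hG.pow_mem_frattini g)
  have hcomm : Commute (a : G ⧸ frattini G) b := by
    rw [← commutatorElement_eq_one_iff_commute, ← QuotientGroup.mk'_apply,
      ← QuotientGroup.mk'_apply, ← map_commutatorElement, QuotientGroup.mk'_apply, QuotientGroup.eq_one_iff]
    exact hG.commutatorElement_mem_frattini a b
  calc (frattini G).index = Nat.card (closure {(a : G ⧸ frattini G), (b : G ⧸ frattini G)}) := by
        rw [hgen, card_top, index_eq_card]
    _ ≤ orderOf (a : G ⧸ frattini G) * orderOf (b : G ⧸ frattini G) :=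
        card_closure_pair_le_of_commute hcomm
    _ ≤ p ^ 2 := sq p ▸ Nat.mul_le_mul (hord a) (hord b)

theorem isCyclic_quotient_of_not_le_frattini (hG : IsPGroup p G) {a b : G}
    (hab : closure {a, b} = ⊤) {N : Subgroup G} [N.Normal] (hN : ¬ N ≤ frattini G) :
    IsCyclic (G ⧸ N) := by
  refine isCyclic_quotient_of_isCyclic_quotient_sup_frattini ?_
  obtain ⟨k, hk⟩ := hG.index (N ⊔ frattini G)
  have hlt : p ^ k < p ^ 2 := hk ▸ (index_strictAnti (right_lt_sup.2 hN)).trans_le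
    (hG.index_frattini_le_of_closure_pair_eq_top hab)
  have hk1 : k ≤ 1 :=
    Nat.lt_succ_iff.1 ((Nat.pow_lt_pow_iff_right (Fact.out : p.Prime).one_lt).1 hlt)
  apply isCyclic_of_card_dvd_prime (p := p)
  rw [← index_eq_card, hk]
  exact (pow_dvd_pow p hk1).trans (pow_one p).dvd

end IsPGroup

theorem stmt_8 {P : Type*} [Group P] [Finite P] (p : ℕ) (hp : p.Prime)
    (hpgrp : IsPGroup p P)
    (hna : ¬ ∀ a b : P, a * b = b * a)
    (hprop : ∀ H : Subgroup P, H ≠ ⊤ → ∀ a b : H, a * b = b * a)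
    (H₀ : Subgroup P) (hH₀ : H₀.Normal) :
    IsCyclic (P ⧸ H₀) ↔ ¬ H₀ ≤ frattini P := by
  have : Fact p.Prime := ⟨hp⟩
  push Not at hna
  obtain ⟨a, b, hab⟩ := hna
  have hgen : closure {a, b} = ⊤ := by
    by_contra hne
    exact hab (congrArg Subtype.val (hprop _ hne ⟨a, subset_closure (by simp)⟩
      ⟨b, subset_closure (by simp)⟩))
  refine ⟨fun hcyc hle => hab ?_, hpgrp.isCyclic_quotient_of_not_le_frattini hgen⟩
  have := isCyclic_of_isCyclic_quotient_of_le_frattini hle hcyc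
  exact IsCyclic.commGroup.mul_comm a b
end
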